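/- Let I = ∫_{T³} dt/w₁(0̄,t) ∈ (0,∞), γ = 6, and μ₀ = √6 · I^{-1/2}. Then for every k ∈ T³ and every z < 0, the quantity Δ_{μ₀}(k; z) = ε(k) + 6 - z - μ₀² ∫_{T³} dt/(w₁(k,t) - z) is strictly positive, where w₁(k,t) = ε(k) + ε((k+t)/2) + ε(t). -/

import Mathlib

open MeasureTheory Real Filter

noncomputable def eps (k : EuclideanSpace ℝ (Fin 3)) : ℝ := ∑ i, (1 - Real.cos (k i))

noncomputable def w1 (k p : EuclideanSpace ℝ (Fin 3)) : ℝ :=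
  eps k + eps ((1 / 2 : ℝ) • (k + p)) + eps p

def T3 : Set (EuclideanSpace ℝ (Fin 3)) := {k | ∀ i, k i ∈ Set.Ioc (-Real.pi) Real.pi}

noncomputable def pibar : EuclideanSpace ℝ (Fin 3) := WithLp.toLp 2 (fun _ => Real.pi)

noncomputable def I0 : ℝ := ∫ t in T3, (w1 (0 : EuclideanSpace ℝ (Fin 3)) t)⁻¹

noncomputable def mu0 : ℝ := Real.sqrt 6 / Real.sqrt I0

/-!
Write `Q ± D` for `w₁(k, ±t) - z`, where `D = ∑ sin (kᵢ/2) sin (tᵢ/2)` is the part of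
`ε((k+t)/2)` that is odd in `t`. Then `(Q + D)⁻¹ + (Q - D)⁻¹ = 2Q / (Q² - D²)`, and Cauchy–Schwarz
gives `4D² ≤ ε(k) ε(t) ≤ Q (Q - w₁(0,t))`, so the symmetrised integrand is at most
`2 / w₁(0,t)`. Since `T³` is symmetric up to a null set, `∫ (w₁(k,t) - z)⁻¹ ≤ I`, hence
`μ₀² ∫ (w₁(k,t) - z)⁻¹ ≤ 6 ≤ ε(k) + 6` and the strict inequality comes from `-z > 0`.
-/

lemma one_sub_cos_eq_two_mul_sin_sq (x : ℝ) : 1 - cos x = 2 * sin (x / 2) ^ 2 := by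
  rw [sin_sq, cos_sq, mul_div_cancel₀ x two_ne_zero]
  ring

lemma eps_eq_two_mul_sum_sin_sq (k : EuclideanSpace ℝ (Fin 3)) :
    eps k = 2 * ∑ i, sin (k i / 2) ^ 2 := by
  simp only [eps, one_sub_cos_eq_two_mul_sin_sq, Finset.mul_sum]

lemma eps_nonneg (k : EuclideanSpace ℝ (Fin 3)) : 0 ≤ eps k :=
  Finset.sum_nonneg fun i _ => sub_nonneg.2 (cos_le_one (k i))

lemma eps_neg (k : EuclideanSpace ℝ (Fin 3)) : eps (-k) = eps k := by
  simp [eps]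

lemma eps_pos_of_mem_T3 {t : EuclideanSpace ℝ (Fin 3)} (ht : t ∈ T3) (ht0 : t ≠ 0) :
    0 < eps t := by
  obtain ⟨i, hi⟩ : ∃ i, t i ≠ 0 := by
    by_contra! h
    exact ht0 (PiLp.ext h)
  have hcos : cos (t i) < 1 := by
    refine (cos_le_one _).lt_of_ne fun h => hi ?_
    exact (cos_eq_one_iff_of_lt_of_lt (by linarith [(ht i).1, pi_pos])
      (by linarith [(ht i).2, pi_pos])).1 h
  exact Finset.sum_pos' (fun j _ => sub_nonneg.2 (cos_le_one (t j)))
    ⟨i, Finset.mem_univ i, sub_pos.2 hcos⟩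

lemma w1_nonneg (k t : EuclideanSpace ℝ (Fin 3)) : 0 ≤ w1 k t := by
  unfold w1
  linarith [eps_nonneg k, eps_nonneg ((1 / 2 : ℝ) • (k + t)), eps_nonneg t]

lemma w1_eq (k t : EuclideanSpace ℝ (Fin 3)) :
    w1 k t = eps k + eps t + ∑ i, (1 - cos (k i / 2) * cos (t i / 2))
      + ∑ i, sin (k i / 2) * sin (t i / 2) := by
  have hmid : ∀ i, ((1 / 2 : ℝ) • (k + t)) i = k i / 2 + t i / 2 := fun i => by
    simp only [PiLp.smul_apply, PiLp.add_apply, smul_eq_mul]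
    ring
  simp only [w1, eps, hmid, cos_add, ← Finset.sum_add_distrib]
  exact Finset.sum_congr rfl fun i _ => by ring

lemma continuous_w1 (k : EuclideanSpace ℝ (Fin 3)) : Continuous (w1 k) := by
  unfold w1 eps
  fun_prop

lemma inv_add_inv_le_of_sq_le {Q D w : ℝ} (hw : 0 < w) (hwQ : w ≤ Q)
    (hD : D ^ 2 ≤ Q * (Q - w)) : (Q + D)⁻¹ + (Q - D)⁻¹ ≤ 2 * w⁻¹ := by
  have hQD : D ^ 2 < Q ^ 2 := by nlinarith
  have hplus : 0 < Q + D := by nlinarith [abs_lt_of_sq_lt_sq hQD (by linarith)]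
  have hminus : 0 < Q - D := by nlinarith [abs_lt_of_sq_lt_sq hQD (by linarith)]
  rw [inv_add_inv hplus.ne' hminus.ne', ← div_eq_mul_inv, div_le_div_iff₀ (by positivity) hw]
  nlinarith

lemma inv_w1_sub_add_inv_w1_neg_sub_le (k : EuclideanSpace ℝ (Fin 3))
    {t : EuclideanSpace ℝ (Fin 3)} (ht : t ∈ T3) (ht0 : t ≠ 0) {z : ℝ} (hz : z ≤ 0) :
    (w1 k t - z)⁻¹ + (w1 k (-t) - z)⁻¹ ≤ 2 * (w1 0 t)⁻¹ := by
  set S := ∑ i, (1 - cos (k i / 2) * cos (t i / 2))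
  set D := ∑ i, sin (k i / 2) * sin (t i / 2)
  set e := ∑ i, (1 - cos (t i / 2))
  set Q := eps k + eps t + S - z
  have hplus : w1 k t - z = Q + D := by rw [w1_eq]; ring
  have hminus : w1 k (-t) - z = Q - D := by
    have hneg : ∀ i, (-t) i = -t i := fun _ => rfl
    simp only [w1_eq, eps_neg, hneg, neg_div, cos_neg, sin_neg, mul_neg,
      Finset.sum_neg_distrib]
    ring
  have hzero : w1 0 t = eps t + e := by
    simp [w1_eq, eps, e]
  -- `|tᵢ/2| ≤ π/2`, so `cos (tᵢ/2) ≥ 0` and `1 - cos (kᵢ/2) cos (tᵢ/2) ≥ 1 - cos (tᵢ/2)`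
  have hSe : e ≤ S := Finset.sum_le_sum fun i _ => by
    have hv : 0 ≤ cos (t i / 2) := cos_nonneg_of_mem_Icc
      ⟨by linarith [(ht i).1, pi_pos], by linarith [(ht i).2, pi_pos]⟩
    nlinarith [cos_le_one (k i / 2)]
  have he : 0 ≤ e := Finset.sum_nonneg fun i _ => sub_nonneg.2 (cos_le_one _)
  have hCS : 4 * D ^ 2 ≤ eps k * eps t := by
    rw [eps_eq_two_mul_sum_sin_sq, eps_eq_two_mul_sum_sin_sq]
    nlinarith [Finset.sum_mul_sq_le_sq_mul_sq Finset.univ (fun i => sin (k i / 2))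
      (fun i => sin (t i / 2))]
  have hk := eps_nonneg k
  have htpos := eps_pos_of_mem_T3 ht ht0
  rw [hplus, hminus, hzero]
  refine inv_add_inv_le_of_sq_le (by positivity) (by linarith) ?_
  nlinarith [mul_le_mul hk (show eps t ≤ Q by linarith) htpos.le (by linarith)]

lemma T3_eq_preimage : T3 =
    (MeasurableEquiv.toLp 2 (Fin 3 → ℝ)).symm ⁻¹' Set.univ.pi fun _ => Set.Ioc (-π) π := by
  ext x
  simp [T3]

lemma measurableSet_T3 : MeasurableSet T3 := by
  rw [T3_eq_preimage]
  exact (MeasurableEquiv.measurable _) (MeasurableSet.univ_pi fun _ => measurableSet_Ioc)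

lemma volume_T3_ne_top : volume T3 ≠ ⊤ := by
  rw [T3_eq_preimage,
    (EuclideanSpace.volume_preserving_symm_measurableEquiv_toLp (Fin 3)).measure_preimage
      (MeasurableSet.univ_pi fun _ => measurableSet_Ioc).nullMeasurableSet,
    Real.volume_pi_Ioc]
  exact ENNReal.prod_ne_top fun _ _ => ENNReal.ofReal_ne_top

-- `T3` is not symmetric, but it differs from the symmetric closed cube by a null set.
lemma setIntegral_T3_comp_neg (g : EuclideanSpace ℝ (Fin 3) → ℝ) :
    ∫ t in T3, g (-t) = ∫ t in T3, g t := by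
  set C := (MeasurableEquiv.toLp 2 (Fin 3 → ℝ)).symm ⁻¹'
    Set.Icc (fun _ => -π) (fun _ => π)
  have hC : T3 =ᵐ[volume] C := by
    rw [T3_eq_preimage]
    exact (EuclideanSpace.volume_preserving_symm_measurableEquiv_toLp (Fin 3)).quasiMeasurePreserving
      |>.preimage_ae_eq Measure.univ_pi_Ioc_ae_eq_Icc
  have hCneg : Neg.neg ⁻¹' C = C := by
    ext x
    simp only [C, Set.mem_preimage, Set.mem_Icc, Pi.le_def]
    simp [neg_le, le_neg, and_comm]
  rw [setIntegral_congr_set hC, setIntegral_congr_set hC, ← hCneg,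
    (Measure.measurePreserving_neg volume).setIntegral_preimage_emb measurableEmbedding_neg,
    hCneg]

lemma integrableOn_inv_sub_of_nonneg {α : Type*} [MeasurableSpace α] {μ : Measure α} {s : Set α}
    (hs : μ s ≠ ⊤) {f : α → ℝ} (hf : Measurable f) (hf0 : ∀ x, 0 ≤ f x) {z : ℝ} (hz : z < 0) :
    IntegrableOn (fun x => (f x - z)⁻¹) s μ := by
  refine Measure.integrableOn_of_bounded (M := (-z)⁻¹) hs
    (hf.sub_const z).inv.aestronglyMeasurable (Eventually.of_forall fun x => ?_)
  rw [norm_inv, norm_of_nonneg (by linarith [hf0 x])]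
  exact inv_anti₀ (by linarith) (by linarith [hf0 x])

lemma setIntegral_inv_w1_sub_le_I0 (k : EuclideanSpace ℝ (Fin 3)) {z : ℝ} (hz : z < 0)
    (hI : IntegrableOn (fun t => (w1 0 t)⁻¹) T3) :
    ∫ t in T3, (w1 k t - z)⁻¹ ≤ I0 := by
  have hf : IntegrableOn (fun t => (w1 k t - z)⁻¹) T3 :=
    integrableOn_inv_sub_of_nonneg volume_T3_ne_top (continuous_w1 k).measurable
      (w1_nonneg k) hz
  have hg : IntegrableOn (fun t => (w1 k (-t) - z)⁻¹) T3 :=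
    integrableOn_inv_sub_of_nonneg volume_T3_ne_top
      ((continuous_w1 k).comp continuous_neg).measurable (fun t => w1_nonneg k (-t)) hz
  have hsymm : ∫ t in T3, ((w1 k t - z)⁻¹ + (w1 k (-t) - z)⁻¹) ≤ ∫ t in T3, 2 * (w1 0 t)⁻¹ := by
    refine integral_mono_ae (hf.add hg) (hI.const_mul 2) ?_
    filter_upwards [ae_restrict_mem measurableSet_T3, ae_restrict_of_ae (Measure.ae_ne volume 0)]
      with t ht ht0
    exact inv_w1_sub_add_inv_w1_neg_sub_le k ht ht0 hz.le
  rw [integral_add hf hg, setIntegral_T3_comp_neg (fun t => (w1 k t - z)⁻¹),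
    integral_const_mul] at hsymm
  rw [I0]
  linarith

lemma I0_nonneg : 0 ≤ I0 :=
  integral_nonneg fun t => inv_nonneg.2 (w1_nonneg 0 t)

lemma mu0_sq : mu0 ^ 2 = 6 / I0 := by
  rw [mu0, div_pow, sq_sqrt (by norm_num), sq_sqrt I0_nonneg]

theorem stmt16 :
    ∀ k ∈ T3, ∀ z < (0 : ℝ),
      0 < eps k + 6 - z - mu0 ^ 2 * ∫ t in T3, (w1 k t - z)⁻¹ := by
  intro k _ z hz
  have hbound : mu0 ^ 2 * ∫ t in T3, (w1 k t - z)⁻¹ ≤ 6 := by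
    rw [mu0_sq]
    by_cases hI : IntegrableOn (fun t => (w1 0 t)⁻¹) T3
    · calc 6 / I0 * ∫ t in T3, (w1 k t - z)⁻¹
          ≤ 6 / I0 * I0 := by
            gcongr
            · exact div_nonneg (by norm_num) I0_nonneg
            · exact setIntegral_inv_w1_sub_le_I0 k hz hI
        _ ≤ 6 := by
            by_cases h0 : I0 = 0 <;> simp [h0]
    · simp [I0, integral_undef hI]
  linarith [eps_nonneg k]
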